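/- Let α ∈ (0, π/8], v > 0 and R_ζ > 0, set d₁ = sin(α/2) tan α + 1 and c₁² = 1 + (d₁ − cos(3α/2))² − cos²(3α/2). Let β : [0,∞) → ℝ be a continuous function with |β_t| < α/2 for all t ≥ 0, and define Y_t = sin(β_t)·R_ζ sin α + cos(β_t)·R_ζ cos α − v ∫₀^t cos(β_t − β_s) ds for t ≥ 0. If T ≥ 0 satisfies Y_T = 0, then R_ζ² − 2v ∫₀^T Y_s ds ≤ c₁²·R_ζ². -/

import Mathlib

/-!
Along the first leg the boat's vertical coordinate is
`Y_t = Rζ cos(α - β_t) - v ∫₀ᵗ cos(β_t - β_s) ds`, and since all headings stay within `α/2`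
of the wind, `cos(α - β_t) ≥ cos(3α/2) =: c` and `cos(β_t - β_s) ≥ cos α`. Hence
`Y_s ≥ c Rζ - v s`, so `∫₀ᵀ Y ≥ c Rζ T - v T²/2`, while `Y_T = 0` pins the travelled length `v T`
between `c Rζ` and `d₁ Rζ`, the upper bound because `cos(α/2) ≤ d₁ cos α`. Completing the
square in `v T` gives the bound.
-/

open Real intervalIntegral Set

theorem cos_le_cos_of_abs_le {x y : ℝ} (hxy : |x| ≤ y) (hy : y ≤ π) : cos y ≤ cos x := by
  rw [← cos_abs x]
  exact cos_le_cos_of_nonneg_of_le_pi (abs_nonneg x) hy hxy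

theorem cos_half_le_mul_cos {α : ℝ} (hα : 0 < cos α) :
    cos (α / 2) ≤ (sin (α / 2) * tan α + 1) * cos α := by
  have hsplit : cos (α / 2) = cos α * cos (α / 2) + sin α * sin (α / 2) := by
    rw [← cos_sub, sub_half]
  have htan : tan α * cos α = sin α := tan_mul_cos hα.ne'
  have hle : cos α * cos (α / 2) ≤ cos α := mul_le_of_le_one_right hα.le (cos_le_one _)
  linear_combination hsplit + hle - sin (α / 2) * htan

theorem le_integral_of_sub_mul_le {f : ℝ → ℝ} {a b T : ℝ} (hT : 0 ≤ T)
    (hf : IntervalIntegrable f MeasureTheory.volume 0 T) (h : ∀ s ∈ Icc 0 T, a - b * s ≤ f s) :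
    a * T - b * T ^ 2 / 2 ≤ ∫ s in 0..T, f s := by
  calc a * T - b * T ^ 2 / 2 = ∫ s in 0..T, (a - b * s) := by
        rw [integral_sub intervalIntegrable_const
          ((continuous_const_mul b).intervalIntegrable _ _), integral_const_mul]
        simp only [integral_const, sub_zero, smul_eq_mul, integral_id, ne_eq, OfNat.ofNat_ne_zero,
          not_false_eq_true, zero_pow]
        ring
    _ ≤ ∫ s in 0..T, f s := integral_mono_on hT
        ((continuous_const.sub (continuous_const_mul b)).intervalIntegrable _ _) hf h

theorem sq_sub_two_mul_le_of_bounds {R v T I c d : ℝ} (hv : 0 ≤ v) (hlo : c * R ≤ v * T)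
    (hhi : v * T ≤ d * R) (hI : c * R * T - v * T ^ 2 / 2 ≤ I) :
    R ^ 2 - 2 * v * I ≤ (1 + (d - c) ^ 2 - c ^ 2) * R ^ 2 := by
  have hsq : (v * T - c * R) ^ 2 ≤ ((d - c) * R) ^ 2 :=
    pow_le_pow_left₀ (by linarith) (by linarith) 2
  nlinarith [mul_le_mul_of_nonneg_left hI (by positivity : 0 ≤ 2 * v)]

section Headings

variable {α a b : ℝ}

theorem cos_le_cos_sub_of_abs_lt (ha : |a| < α / 2) (hb : |b| < α / 2) (hα : α ≤ π) :
    cos α ≤ cos (a - b) :=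
  cos_le_cos_of_abs_le ((abs_sub a b).trans (by linarith)) hα

theorem cos_three_half_le_cos_sub (ha : |a| < α / 2) (hα : 3 * α / 2 ≤ π) :
    cos (3 * α / 2) ≤ cos (α - a) := by
  have hα₀ : 0 < α := by linarith [abs_nonneg a]
  exact cos_le_cos_of_abs_le ((abs_sub α a).trans (by rw [abs_of_pos hα₀]; linarith)) hα

theorem cos_sub_le_cos_half (ha : |a| < α / 2) (hα : 3 * α / 2 ≤ π) :
    cos (α - a) ≤ cos (α / 2) := by
  obtain ⟨ha₁, ha₂⟩ := abs_lt.1 ha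
  exact cos_le_cos_of_nonneg_of_le_pi (by linarith) (by linarith) (by linarith)

end Headings

section FirstLeg

variable {β : ℝ → ℝ} {α t : ℝ}

theorem integral_cos_sub_le (ht : 0 ≤ t) : ∫ s in 0..t, cos (β t - β s) ≤ t := by
  have h := norm_integral_le_of_norm_le_const (a := 0) (b := t) (C := 1)
    (f := fun s ↦ cos (β t - β s)) fun s _ ↦ by simpa using abs_cos_le_one _
  rw [Real.norm_eq_abs, sub_zero, abs_of_nonneg ht, one_mul] at h
  exact (le_abs_self _).trans h

theorem mul_cos_le_integral_cos_sub (hβc : Continuous β)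
    (hβ : ∀ s, 0 ≤ s → |β s| < α / 2) (hα : α ≤ π) (ht : 0 ≤ t) :
    t * cos α ≤ ∫ s in 0..t, cos (β t - β s) := by
  calc t * cos α = ∫ _ in 0..t, cos α := by simp
    _ ≤ _ := integral_mono_on ht intervalIntegrable_const
        ((continuous_cos.comp (continuous_const.sub hβc)).intervalIntegrable _ _)
        fun s hs ↦ cos_le_cos_sub_of_abs_lt (hβ t ht) (hβ s hs.1) hα

variable {v R T : ℝ}

theorem continuous_first_leg (hβc : Continuous β) :
    Continuous fun t ↦ R * cos (α - β t) - v * ∫ s in 0..t, cos (β t - β s) := by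
  fun_prop

theorem sub_mul_le_first_leg (hβ : ∀ s, 0 ≤ s → |β s| < α / 2) (hα : 3 * α / 2 ≤ π)
    (hR : 0 ≤ R) (hv : 0 ≤ v) (ht : 0 ≤ t) :
    cos (3 * α / 2) * R - v * t ≤ R * cos (α - β t) - v * ∫ s in 0..t, cos (β t - β s) := by
  have hcos := mul_le_mul_of_nonneg_left (cos_three_half_le_cos_sub (hβ t ht) hα) hR
  have hint := mul_le_mul_of_nonneg_left (integral_cos_sub_le (β := β) ht) hv
  linarith

theorem crossing_length_le (hβc : Continuous β) (hβ : ∀ s, 0 ≤ s → |β s| < α / 2)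
    (hα : 3 * α / 2 ≤ π) (hcosα : 0 < cos α) (hR : 0 ≤ R) (hv : 0 ≤ v) (hT : 0 ≤ T)
    (hcross : R * cos (α - β T) = v * ∫ s in 0..T, cos (β T - β s)) :
    v * T ≤ (sin (α / 2) * tan α + 1) * R := by
  have hα₀ : 0 < α := by linarith [abs_nonneg (β 0), hβ 0 le_rfl]
  have hint := mul_le_mul_of_nonneg_left
    (mul_cos_le_integral_cos_sub hβc hβ (by linarith) hT) hv
  have hcos := mul_le_mul_of_nonneg_left
    ((cos_sub_le_cos_half (hβ T hT) hα).trans (cos_half_le_mul_cos hcosα)) hR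
  refine le_of_mul_le_mul_right ?_ hcosα
  linarith

end FirstLeg

/-- **Contraction of the distance to the target during the first leg.**
A boat on starboard tack beating upwind from `(Rζ sin α, Rζ cos α)` in a wind `β`
that never deviates by more than `α/2` has squared distance
`R_t² = Rζ² − 2v ∫₀^t Y_s ds`; at the time `T` where it crosses the horizontal axis
(`Y_T = 0`), this squared distance is at most `c₁²·Rζ²`, where
`c₁² = 1 + (d₁ − cos(3α/2))² − cos²(3α/2)` and `d₁ = sin(α/2) tan α + 1`. -/
theorem first_leg_contraction
    (α v Rζ : ℝ) (hα : α ∈ Set.Ioc 0 (π / 8)) (hv : 0 < v) (hRζ : 0 < Rζ)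
    (d₁ c₁sq : ℝ) (hd₁ : d₁ = Real.sin (α / 2) * Real.tan α + 1)
    (hc₁ : c₁sq = 1 + (d₁ - Real.cos (3 * α / 2)) ^ 2 - Real.cos (3 * α / 2) ^ 2)
    (β : ℝ → ℝ) (hβcont : Continuous β) (hβ : ∀ t : ℝ, 0 ≤ t → |β t| < α / 2)
    (Y : ℝ → ℝ)
    (hY : ∀ t : ℝ, Y t =
      Real.sin (β t) * (Rζ * Real.sin α) + Real.cos (β t) * (Rζ * Real.cos α)
        - v * ∫ s in (0:ℝ)..t, Real.cos (β t - β s))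
    (T : ℝ) (hT : 0 ≤ T) (hYT : Y T = 0) :
    Rζ ^ 2 - 2 * v * ∫ s in (0:ℝ)..T, Y s ≤ c₁sq * Rζ ^ 2 := by
  have hα₃ : 3 * α / 2 ≤ π := by linarith [hα.2, pi_pos]
  have hcosα : 0 < cos α := cos_pos_of_mem_Ioo ⟨by linarith [hα.1], by linarith [hα.2, pi_pos]⟩
  have hY' : Y = fun t ↦ Rζ * cos (α - β t) - v * ∫ s in 0..t, cos (β t - β s) := by
    funext t
    rw [hY, cos_sub]
    ring
  have hYlow : ∀ s ∈ Icc 0 T, cos (3 * α / 2) * Rζ - v * s ≤ Y s := fun s hs ↦ by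
    rw [hY']
    exact sub_mul_le_first_leg hβ hα₃ hRζ.le hv.le hs.1
  have hcross : Rζ * cos (α - β T) = v * ∫ s in 0..T, cos (β T - β s) := by
    rw [hY'] at hYT
    linarith
  have hlo : cos (3 * α / 2) * Rζ ≤ v * T := by linarith [hYlow T ⟨hT, le_rfl⟩]
  have hhi := crossing_length_le hβcont hβ hα₃ hcosα hRζ.le hv.le hT hcross
  have hintY := le_integral_of_sub_mul_le hT
    (hY' ▸ (continuous_first_leg hβcont).intervalIntegrable 0 T) hYlow
  rw [hc₁]
  exact sq_sub_two_mul_le_of_bounds hv.le hlo (hd₁ ▸ hhi) hintY
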